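/- arXiv:2408.13048 — 7 statements merged into one kernel-verified Lean document; each statement's English description precedes it below -/
import Mathlib

section
/- Fundamental theorem of asset pricing under model uncertainty (multi-period): there exists no self-financing trading strategy that is an arbitrage under model uncertainty if and only if there exists a martingale measure Q with Q(ω) > 0 for every ω ∈ Ω. -/
open Finset MeasureTheory

variable {Ω : Type*} [Fintype Ω]

/-- A probability measure on the finite sample space `Ω`. -/
def IsProb (P : Ω → ℝ) : Prop := (∀ ω, 0 ≤ P ω) ∧ ∑ ω, P ω = 1

/-- Expectation of `X` under `P`: `E_P[X] = ∑ ω, P ω * X ω`. -/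
def expect (P X : Ω → ℝ) : ℝ := ∑ ω, P ω * X ω

/-- Discounted value process of the strategy `(h0, h)`:
`V*(0) = h0(1) + ∑ m, h m 1 * S m 0` and `V*(t) = h0(t) + ∑ m, h m t * S m t` for `t ≥ 1`. -/
def Vstar {M : ℕ} (S : Fin M → ℕ → Ω → ℝ) (h0 : ℕ → Ω → ℝ)
    (h : Fin M → ℕ → Ω → ℝ) : ℕ → Ω → ℝ := fun t ω =>
  if t = 0 then h0 1 ω + ∑ m, h m 1 ω * S m 0 ω
  else h0 t ω + ∑ m, h m t ω * S m t ω

/-- Discounted gain process `G*(t) = ∑ m, ∑ u = 1..t, h m u * (S m u − S m (u−1))`. -/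
def Gstar {M : ℕ} (S : Fin M → ℕ → Ω → ℝ) (h : Fin M → ℕ → Ω → ℝ) : ℕ → Ω → ℝ :=
  fun t ω => ∑ m, ∑ u ∈ Finset.Icc 1 t, h m u ω * (S m u ω - S m (u - 1) ω)

/-- Self-financing condition, for `t = 1, …, T−1`. -/
def SelfFinancing {M : ℕ} (T : ℕ) (S : Fin M → ℕ → Ω → ℝ) (h0 : ℕ → Ω → ℝ)
    (h : Fin M → ℕ → Ω → ℝ) : Prop :=
  ∀ t : ℕ, 1 ≤ t → t + 1 ≤ T → ∀ ω,
    (h0 (t + 1) ω - h0 t ω) + ∑ m, (h m (t + 1) ω - h m t ω) * S m t ω = 0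

/-- The holdings used on `(t−1, t]` are chosen at time `t−1`:
each `h_m(t)` is `ℱ_{t−1}`-measurable, `t = 1, …, T`. -/
def MeasStrategy {M : ℕ} (T : ℕ) (F : ℕ → MeasurableSpace Ω) (h0 : ℕ → Ω → ℝ)
    (h : Fin M → ℕ → Ω → ℝ) : Prop :=
  ∀ t : ℕ, 1 ≤ t → t ≤ T →
    Measurable[F (t - 1)] (h0 t) ∧ ∀ m, Measurable[F (t - 1)] (h m t)

/-- Arbitrage under model uncertainty in the multi-period model, given the family
`Pfam` of actual probability measures. -/
def IsArbitrage {M : ℕ} (T : ℕ) (S : Fin M → ℕ → Ω → ℝ) (Pfam : Set (Ω → ℝ))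
    (h0 : ℕ → Ω → ℝ) (h : Fin M → ℕ → Ω → ℝ) : Prop :=
  (∀ ω, Vstar S h0 h 0 ω = 0) ∧ (∀ ω, 0 ≤ Vstar S h0 h T ω) ∧
    ∃ P ∈ Pfam, 0 < expect P (Vstar S h0 h T)

/-- Martingale measure: `E_Q[S*_m(u) ∣ ℱ_t] = S*_m(t)` for all `0 ≤ t ≤ u ≤ T`,
expressed via sums over `ℱ_t`-measurable sets. -/
def IsMartingaleMeasure {M : ℕ} (T : ℕ) (F : ℕ → MeasurableSpace Ω)
    (S : Fin M → ℕ → Ω → ℝ) (Q : Ω → ℝ) : Prop :=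
  ∀ (m : Fin M) (t u : ℕ), t ≤ u → u ≤ T → ∀ A : Finset Ω,
    MeasurableSet[F t] (A : Set Ω) →
    ∑ ω ∈ A, Q ω * S m u ω = ∑ ω ∈ A, Q ω * S m t ω

/-- Supermartingale measure: `E_Q[S*_m(u) ∣ ℱ_t] ≤ S*_m(t)` for all `0 ≤ t ≤ u ≤ T`,
expressed via sums over `ℱ_t`-measurable sets. -/
def IsSupermartingaleMeasure {M : ℕ} (T : ℕ) (F : ℕ → MeasurableSpace Ω)
    (S : Fin M → ℕ → Ω → ℝ) (Q : Ω → ℝ) : Prop :=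
  ∀ (m : Fin M) (t u : ℕ), t ≤ u → u ≤ T → ∀ A : Finset Ω,
    MeasurableSet[F t] (A : Set Ω) →
    ∑ ω ∈ A, Q ω * S m u ω ≤ ∑ ω ∈ A, Q ω * S m t ω

/-!
A self-financing strategy ends with value `V*(0) + G*(T)`, where `G*` is the discounted gain of
its risky positions; conversely, any predictable risky position becomes a self-financing
strategy with zero initial value and terminal value `G*(T)` once the bond account absorbs its
cash flows. Under a strictly positive martingale measure every gain has zero expectation, which
rules out arbitrage. Without arbitrage, the subspace of gains misses the standard simplex, so
separating the two (Stiemke's lemma) gives a strictly positive probability under which every gain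
has zero expectation; testing this on buying asset `m` at time `t` on an `ℱ_t`-event and selling
at time `u` yields the martingale property.
-/

theorem Finset.sum_Ioc_sub_pred {G : Type*} [AddCommGroup G] (f : ℕ → G) {t u : ℕ}
    (htu : t ≤ u) : ∑ v ∈ Ioc t u, (f v - f (v - 1)) = f u - f t := by
  rw [← Ico_add_one_add_one_eq_Ioc, ← sum_Ico_add']
  simp only [Nat.add_sub_cancel]
  exact sum_Ico_sub f htu

theorem sum_mul_eq_zero_of_measurable {mΩ : MeasurableSpace Ω} {g D : Ω → ℝ}
    (hg : Measurable[mΩ] g)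
    (hD : ∀ A : Finset Ω, MeasurableSet[mΩ] (A : Set Ω) → ∑ ω ∈ A, D ω = 0) :
    ∑ ω, g ω * D ω = 0 := by
  classical
  rw [← sum_fiberwise_of_maps_to (t := univ.image g) fun ω _ => mem_image_of_mem g (mem_univ ω)]
  refine sum_eq_zero fun c _ => ?_
  have hA : MeasurableSet[mΩ] ((univ.filter (g · = c) : Finset Ω) : Set Ω) := by
    simpa [Set.preimage] using hg (measurableSet_singleton c)
  calc ∑ ω ∈ univ with g ω = c, g ω * D ω = ∑ ω ∈ univ with g ω = c, c * D ω :=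
        sum_congr rfl fun ω hω => by rw [(mem_filter.mp hω).2]
    _ = 0 := by rw [← mul_sum, hD _ hA, mul_zero]

theorem expect_pos_of_nonneg {P X : Ω → ℝ} (hP : ∀ ω, 0 ≤ P ω) (hX : ∀ ω, 0 ≤ X ω) {ω : Ω}
    (hPω : 0 < P ω) (hXω : 0 < X ω) : 0 < expect P X :=
  sum_pos' (fun ω _ => mul_nonneg (hP ω) (hX ω)) ⟨ω, mem_univ ω, mul_pos hPω hXω⟩

theorem exists_pos_of_expect_pos {P X : Ω → ℝ} (hP : ∀ ω, 0 ≤ P ω) (h : 0 < expect P X) :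
    ∃ ω, 0 < X ω := by
  obtain ⟨ω, -, hω⟩ := exists_lt_of_sum_lt (f := 0) (g := fun ω => P ω * X ω) (s := univ)
    (by simpa [_root_.expect] using h)
  exact ⟨ω, pos_of_mul_pos_right hω (hP ω)⟩

/-- Stiemke's lemma. -/
theorem Submodule.exists_isProb_pos_expect_eq_zero [Nonempty Ω] (L : Submodule ℝ (Ω → ℝ))
    (hL : Disjoint (stdSimplex ℝ Ω) (L : Set (Ω → ℝ))) :
    ∃ Q, IsProb Q ∧ (∀ ω, 0 < Q ω) ∧ ∀ X ∈ L, expect Q X = 0 := by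
  classical
  obtain ⟨f, u, v, hfK, huv, hfL⟩ := geometric_hahn_banach_compact_closed
    (convex_stdSimplex ℝ Ω) (isCompact_stdSimplex ℝ Ω) L.convex L.closed_of_finiteDimensional hL
  have hf0 : ∀ X ∈ L, f X = 0 := by
    intro X hX
    by_contra hne
    have := hfL _ (L.smul_mem ((v - 1) / f X) hX)
    rw [map_smul, smul_eq_mul, div_mul_cancel₀ _ hne] at this
    linarith
  have hv : v < 0 := by simpa using hfL 0 L.zero_mem
  set q : Ω → ℝ := fun ω => -f fun j => if ω = j then 1 else 0
  have hq : ∀ ω, 0 < q ω := fun ω => by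
    have := hfK _ (ite_eq_mem_stdSimplex ℝ ω)
    simp only [q]
    linarith
  have hfq : ∀ X, f X = -expect q X := fun X => by
    rw [← f.coe_coe, f.toLinearMap.pi_apply_eq_sum_univ X]
    simp [_root_.expect, q, mul_comm]
  have hc : 0 < ∑ ω, q ω := sum_pos (fun ω _ => hq ω) univ_nonempty
  refine ⟨fun ω => q ω / ∑ ω, q ω, ⟨fun ω => (div_pos (hq ω) hc).le, ?_⟩,
    fun ω => div_pos (hq ω) hc, fun X hX => ?_⟩
  · rw [← sum_div, div_self hc.ne']
  · have hqX : expect q X = 0 := by linarith [hf0 X hX, hfq X]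
    simp only [_root_.expect, div_mul_eq_mul_div, ← sum_div] at hqX ⊢
    rw [hqX, zero_div]

def IsPredictableHoldings {M : ℕ} (T : ℕ) (F : ℕ → MeasurableSpace Ω) (h : Fin M → ℕ → Ω → ℝ) :
    Prop :=
  ∀ t, 1 ≤ t → t ≤ T → ∀ m, Measurable[F (t - 1)] (h m t)

set_option linter.unusedSectionVars false

section Gains

variable {M : ℕ} (S : Fin M → ℕ → Ω → ℝ) (h : Fin M → ℕ → Ω → ℝ)

@[simp]
theorem Gstar_zero : Gstar S h 0 = 0 := by
  ext ω
  simp [Gstar]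

theorem Gstar_succ (t : ℕ) (ω : Ω) :
    Gstar S h (t + 1) ω = Gstar S h t ω + ∑ m, h m (t + 1) ω * (S m (t + 1) ω - S m t ω) := by
  simp only [Gstar, ← sum_add_distrib]
  refine sum_congr rfl fun m _ => ?_
  rw [sum_Icc_succ_top (by omega), Nat.add_sub_cancel]

theorem Vstar_zero (h0 : ℕ → Ω → ℝ) (ω : Ω) :
    Vstar S h0 h 0 ω = h0 1 ω + ∑ m, h m 1 ω * S m 0 ω := if_pos rfl

theorem Vstar_succ (h0 : ℕ → Ω → ℝ) (t : ℕ) (ω : Ω) :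
    Vstar S h0 h (t + 1) ω = h0 (t + 1) ω + ∑ m, h m (t + 1) ω * S m (t + 1) ω :=
  if_neg t.succ_ne_zero

variable {S h} {T : ℕ} {h0 : ℕ → Ω → ℝ}

theorem SelfFinancing.Vstar_succ_eq (hsf : SelfFinancing T S h0 h) {t : ℕ} (ht : t + 1 ≤ T)
    (ω : Ω) : Vstar S h0 h (t + 1) ω =
      Vstar S h0 h t ω + ∑ m, h m (t + 1) ω * (S m (t + 1) ω - S m t ω) := by
  simp only [Vstar_succ, mul_sub, sum_sub_distrib]
  cases t with
  | zero => rw [Vstar_zero]; ring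
  | succ s =>
    have := hsf (s + 1) (by omega) ht ω
    simp only [sub_mul, sum_sub_distrib] at this
    rw [Vstar_succ]
    linarith

theorem SelfFinancing.Vstar_eq_add_Gstar (hsf : SelfFinancing T S h0 h) {t : ℕ} (ht : t ≤ T)
    (ω : Ω) : Vstar S h0 h t ω = Vstar S h0 h 0 ω + Gstar S h t ω := by
  induction t with
  | zero => simp
  | succ t ih => rw [hsf.Vstar_succ_eq ht, ih (by omega), Gstar_succ]; ring

variable (S h)

/-- The bond holdings that finance the risky positions `h`: the portfolio bought at time `t`
costs exactly the gain `G*(t)` accumulated so far. -/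
def financingBond : ℕ → Ω → ℝ :=
  fun t ω => Gstar S h (t - 1) ω - ∑ m, h m t ω * S m (t - 1) ω

theorem financingBond_succ_add (t : ℕ) (ω : Ω) :
    financingBond S h (t + 1) ω + ∑ m, h m (t + 1) ω * S m t ω = Gstar S h t ω := by
  simp [financingBond]

theorem Vstar_financingBond (t : ℕ) (ω : Ω) :
    Vstar S (financingBond S h) h t ω = Gstar S h t ω := by
  cases t with
  | zero => exact (Vstar_zero S h _ ω).trans (financingBond_succ_add S h 0 ω)
  | succ t =>
    rw [Vstar_succ, Gstar_succ, ← financingBond_succ_add S h t ω]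
    simp only [mul_sub, sum_sub_distrib]
    ring

theorem selfFinancing_financingBond (T : ℕ) : SelfFinancing T S (financingBond S h) h := by
  intro t ht _ ω
  obtain ⟨s, rfl⟩ : ∃ s, t = s + 1 := ⟨t - 1, by omega⟩
  have hcost := financingBond_succ_add S h (s + 1) ω
  have hvalue := Vstar_financingBond S h (s + 1) ω
  rw [Vstar_succ] at hvalue
  simp only [sub_mul, sum_sub_distrib]
  linarith

variable {S h} {F : ℕ → MeasurableSpace Ω}

theorem measurable_Gstar (hFmono : ∀ s t : ℕ, s ≤ t → t ≤ T → F s ≤ F t)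
    (hSmeas : ∀ (m : Fin M) (t : ℕ), t ≤ T → Measurable[F t] (S m t))
    (hh : IsPredictableHoldings T F h) {t : ℕ} (ht : t ≤ T) : Measurable[F t] (Gstar S h t) := by
  induction t with
  | zero => rw [Gstar_zero]; exact measurable_const
  | succ t ih =>
    have hle := hFmono t (t + 1) (by omega) ht
    rw [funext (Gstar_succ S h t)]
    exact ((ih (by omega)).mono hle le_rfl).add <| Finset.measurable_sum _ fun m _ =>
      ((hh (t + 1) (by omega) ht m).mono hle le_rfl).mul
        ((hSmeas m (t + 1) ht).sub ((hSmeas m t (by omega)).mono hle le_rfl))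

theorem measStrategy_financingBond (hFmono : ∀ s t : ℕ, s ≤ t → t ≤ T → F s ≤ F t)
    (hSmeas : ∀ (m : Fin M) (t : ℕ), t ≤ T → Measurable[F t] (S m t))
    (hh : IsPredictableHoldings T F h) : MeasStrategy T F (financingBond S h) h := fun t h1 htT =>
  ⟨(measurable_Gstar hFmono hSmeas hh (by omega)).sub <| Finset.measurable_sum _ fun m _ =>
      (hh t h1 htT m).mul (hSmeas m (t - 1) (by omega)),
    hh t h1 htT⟩

theorem IsMartingaleMeasure.expect_Gstar {Q : Ω → ℝ} (hQ : IsMartingaleMeasure T F S Q)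
    (hh : IsPredictableHoldings T F h) : expect Q (Gstar S h T) = 0 := by
  have hswap : expect Q (Gstar S h T) =
      ∑ m, ∑ u ∈ Icc 1 T, ∑ ω, h m u ω * (Q ω * (S m u ω - S m (u - 1) ω)) := by
    simp only [_root_.expect, Gstar, mul_sum]
    rw [sum_comm]
    exact sum_congr rfl fun m _ =>
      sum_comm.trans (sum_congr rfl fun u _ => sum_congr rfl fun ω _ => by ring)
  rw [hswap]
  refine sum_eq_zero fun m _ => sum_eq_zero fun u hu => ?_
  rw [mem_Icc] at hu
  refine sum_mul_eq_zero_of_measurable (hh u hu.1 hu.2 m) fun A hA => ?_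
  simp only [mul_sub, sum_sub_distrib, hQ m (u - 1) u (by omega) hu.2 A hA, sub_self]

theorem IsMartingaleMeasure.not_isArbitrage {Q : Ω → ℝ} (hQ : IsMartingaleMeasure T F S Q)
    (hQpos : ∀ ω, 0 < Q ω) {Pfam : Set (Ω → ℝ)} (hPprob : ∀ P ∈ Pfam, IsProb P)
    (hmeas : MeasStrategy T F h0 h) (hsf : SelfFinancing T S h0 h) :
    ¬ IsArbitrage T S Pfam h0 h := by
  rintro ⟨hV0, hVT, P, hP, hEP⟩
  obtain ⟨ω, hω⟩ := exists_pos_of_expect_pos (hPprob P hP).1 hEP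
  have hVG : Vstar S h0 h T = Gstar S h T :=
    funext fun ω => by rw [hsf.Vstar_eq_add_Gstar le_rfl, hV0, zero_add]
  have hzero := hQ.expect_Gstar fun t h1 h2 => (hmeas t h1 h2).2
  rw [← hVG] at hzero
  exact (expect_pos_of_nonneg (fun ω => (hQpos ω).le) hVT (hQpos ω) hω).ne' hzero

end Gains

section NoArbitrage

variable {M : ℕ}

def gainSubmodule (T : ℕ) (F : ℕ → MeasurableSpace Ω) (S : Fin M → ℕ → Ω → ℝ) :
    Submodule ℝ (Ω → ℝ) where
  carrier := {X | ∃ h, IsPredictableHoldings T F h ∧ Gstar S h T = X}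
  zero_mem' := ⟨0, fun _ _ _ _ => measurable_const, by ext; simp [Gstar]⟩
  add_mem' := by
    rintro _ _ ⟨h, hh, rfl⟩ ⟨h', hh', rfl⟩
    exact ⟨h + h', fun t h1 h2 m => (hh t h1 h2 m).add (hh' t h1 h2 m),
      by ext; simp [Gstar, add_mul, sum_add_distrib]⟩
  smul_mem' := by
    rintro c _ ⟨h, hh, rfl⟩
    exact ⟨c • h, fun t h1 h2 m => (hh t h1 h2 m).const_mul c,
      by ext; simp [Gstar, mul_sum, mul_assoc]⟩

theorem disjoint_stdSimplex_gainSubmodule {T : ℕ} {F : ℕ → MeasurableSpace Ω}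
    {S : Fin M → ℕ → Ω → ℝ} (hFmono : ∀ s t : ℕ, s ≤ t → t ≤ T → F s ≤ F t)
    (hSmeas : ∀ (m : Fin M) (t : ℕ), t ≤ T → Measurable[F t] (S m t))
    {Pfam : Set (Ω → ℝ)} (hPprob : ∀ P ∈ Pfam, IsProb P) (hPpos : ∀ ω : Ω, ∃ P ∈ Pfam, 0 < P ω)
    (hNA : ¬ ∃ (h0 : ℕ → Ω → ℝ) (h : Fin M → ℕ → Ω → ℝ),
      MeasStrategy T F h0 h ∧ SelfFinancing T S h0 h ∧ IsArbitrage T S Pfam h0 h) :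
    Disjoint (stdSimplex ℝ Ω) (gainSubmodule T F S : Set (Ω → ℝ)) := by
  rw [Set.disjoint_left]
  rintro X ⟨hXnn, hXsum⟩ ⟨h, hh, rfl⟩
  obtain ⟨ω, -, hω⟩ :=
    exists_lt_of_sum_lt (f := 0) (g := Gstar S h T) (s := univ) (by simp [hXsum])
  obtain ⟨P, hP, hPω⟩ := hPpos ω
  have hV := Vstar_financingBond S h
  refine hNA ⟨financingBond S h, h, measStrategy_financingBond hFmono hSmeas hh,
    selfFinancing_financingBond S h T, fun ω => by simp [hV], fun ω => by simp [hV, hXnn ω],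
    P, hP, ?_⟩
  rw [funext (hV T)]
  exact expect_pos_of_nonneg (hPprob P hP).1 hXnn hPω hω

section BuyAndHold

variable [DecidableEq Ω] (m : Fin M) (t u : ℕ) (A : Finset Ω)

def buyAndHold : Fin M → ℕ → Ω → ℝ :=
  fun m' v ω => if m' = m ∧ v ∈ Ioc t u ∧ ω ∈ A then 1 else 0

variable {m t u A} {T : ℕ}

theorem isPredictableHoldings_buyAndHold {F : ℕ → MeasurableSpace Ω}
    (hFmono : ∀ s t : ℕ, s ≤ t → t ≤ T → F s ≤ F t) (hA : MeasurableSet[F t] (A : Set Ω)) :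
    IsPredictableHoldings T F (buyAndHold m t u A) := by
  intro v h1 hvT m'
  by_cases hv : m' = m ∧ v ∈ Ioc t u
  · obtain ⟨rfl, hv⟩ := hv
    have hvA : MeasurableSet[F (v - 1)] {ω | m' = m' ∧ v ∈ Ioc t u ∧ ω ∈ A} := by
      simpa [hv] using hFmono t (v - 1) (by rw [mem_Ioc] at hv; omega) (by omega) _ hA
    exact Measurable.ite hvA measurable_const measurable_const
  · have hzero : buyAndHold m t u A m' v = 0 := funext fun ω => if_neg (by tauto)
    rw [hzero]
    exact measurable_const

theorem Gstar_buyAndHold (S : Fin M → ℕ → Ω → ℝ) (htu : t ≤ u) (huT : u ≤ T) (ω : Ω) :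
    Gstar S (buyAndHold m t u A) T ω = if ω ∈ A then S m u ω - S m t ω else 0 := by
  have hsub : Ioc t u ⊆ Icc 1 T := fun v hv => by simp only [mem_Ioc, mem_Icc] at hv ⊢; omega
  rw [Gstar, sum_eq_single m (fun m' _ hm' => sum_eq_zero fun v _ => by simp [buyAndHold, hm'])
    (by simp)]
  split_ifs with hω
  · simp only [buyAndHold, true_and, hω, and_true, ite_mul, one_mul, zero_mul]
    rw [← sum_filter, filter_mem_eq_inter, inter_eq_right.mpr hsub, sum_Ioc_sub_pred _ htu]
  · simp [buyAndHold, hω]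

theorem expect_Gstar_buyAndHold (S : Fin M → ℕ → Ω → ℝ) (Q : Ω → ℝ) (htu : t ≤ u) (huT : u ≤ T) :
    expect Q (Gstar S (buyAndHold m t u A) T) = ∑ ω ∈ A, Q ω * (S m u ω - S m t ω) := by
  simp only [_root_.expect, Gstar_buyAndHold S htu huT, mul_ite, mul_zero, sum_ite_mem, univ_inter]

end BuyAndHold

theorem isMartingaleMeasure_of_expect_gain_eq_zero {T : ℕ} {F : ℕ → MeasurableSpace Ω}
    {S : Fin M → ℕ → Ω → ℝ} {Q : Ω → ℝ} (hFmono : ∀ s t : ℕ, s ≤ t → t ≤ T → F s ≤ F t)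
    (hQ : ∀ X ∈ gainSubmodule T F S, expect Q X = 0) : IsMartingaleMeasure T F S Q := by
  classical
  intro m t u htu huT A hA
  have := hQ _ ⟨_, isPredictableHoldings_buyAndHold (m := m) (u := u) hFmono hA, rfl⟩
  rw [expect_Gstar_buyAndHold S Q htu huT] at this
  simpa only [mul_sub, sum_sub_distrib, sub_eq_zero] using this

end NoArbitrage

theorem fundamental_theorem_multi_period_general [Nonempty Ω]
    (T : ℕ) {M : ℕ}
    (F : ℕ → MeasurableSpace Ω)
    (hFmono : ∀ s t : ℕ, s ≤ t → t ≤ T → F s ≤ F t)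
    (S : Fin M → ℕ → Ω → ℝ)
    (hSmeas : ∀ (m : Fin M) (t : ℕ), t ≤ T → Measurable[F t] (S m t))
    (Pfam : Set (Ω → ℝ))
    (hPprob : ∀ P ∈ Pfam, IsProb P)
    (hPpos : ∀ ω : Ω, ∃ P ∈ Pfam, 0 < P ω) :
    (¬ ∃ (h0 : ℕ → Ω → ℝ) (h : Fin M → ℕ → Ω → ℝ),
        MeasStrategy T F h0 h ∧ SelfFinancing T S h0 h ∧
          IsArbitrage T S Pfam h0 h) ↔
      ∃ Q : Ω → ℝ, IsProb Q ∧ (∀ ω, 0 < Q ω) ∧ IsMartingaleMeasure T F S Q := by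
  constructor
  · intro hNA
    obtain ⟨Q, hQ, hQpos, hQgain⟩ := (gainSubmodule T F S).exists_isProb_pos_expect_eq_zero
      (disjoint_stdSimplex_gainSubmodule hFmono hSmeas hPprob hPpos hNA)
    exact ⟨Q, hQ, hQpos, isMartingaleMeasure_of_expect_gain_eq_zero hFmono hQgain⟩
  · rintro ⟨Q, -, hQpos, hQ⟩ ⟨h0, h, hmeas, hsf, harb⟩
    exact hQ.not_isArbitrage hQpos hPprob hmeas hsf harb

/-- Fundamental theorem of asset pricing under model uncertainty (multi-period). -/
theorem fundamental_theorem_multi_period [Nonempty Ω]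
    (T : ℕ) {M : ℕ}
    (F : ℕ → MeasurableSpace Ω)
    (hFmono : ∀ s t : ℕ, s ≤ t → t ≤ T → F s ≤ F t)
    (hF0 : F 0 = ⊥) (hFT : F T = ⊤)
    (S : Fin M → ℕ → Ω → ℝ)
    (hSmeas : ∀ (m : Fin M) (t : ℕ), t ≤ T → Measurable[F t] (S m t))
    (Pfam : Set (Ω → ℝ)) (hPne : Pfam.Nonempty)
    (hPprob : ∀ P ∈ Pfam, IsProb P)
    (hPpos : ∀ ω : Ω, ∃ P ∈ Pfam, 0 < P ω) :
    (¬ ∃ (h0 : ℕ → Ω → ℝ) (h : Fin M → ℕ → Ω → ℝ),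
        MeasStrategy T F h0 h ∧ SelfFinancing T S h0 h ∧
          IsArbitrage T S Pfam h0 h) ↔
      ∃ Q : Ω → ℝ, IsProb Q ∧ (∀ ω, 0 < Q ω) ∧ IsMartingaleMeasure T F S Q :=
  fundamental_theorem_multi_period_general T F hFmono S hSmeas Pfam hPprob hPpos
end

section
/- Necessary condition for no-arbitrage under model uncertainty with short sales prohibitions (multi-period): if there exists no self-financing trading strategy with h_m(t)(ω) ≥ 0 for all m = 1,…,M, t = 1,…,T, ω ∈ Ω that is an arbitrage under model uncertainty, then there exists a nonempty family 𝒬 of probability measures on Ω such that for every ω ∈ Ω there is some Q ∈ 𝒬 with Q(ω) > 0, and for every m = 1,…,M, every 0 ≤ t ≤ u ≤ T, and every A ∈ ℱ_t, the infimum of the set {Σ_{ω∈A} Q(ω)(S*_m(u)(ω) − S*_m(t)(ω)) : Q ∈ 𝒬} is ≤ 0 (a weak risk neutral nonlinear expectation). -/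
open Finset MeasureTheory

variable {Ω : Type*} [Fintype Ω]

private lemma telescope_sum (f : ℕ → ℝ) :
    ∀ u t : ℕ, t ≤ u → ∑ v ∈ Finset.Icc (t+1) u, (f v - f (v-1)) = f u - f t := by
  intro u
  induction u with
  | zero => intro t ht; interval_cases t; simp
  | succ u ih =>
    intro t ht
    rcases Nat.lt_or_ge t (u+1) with h | h
    · have h' : t ≤ u := Nat.lt_succ_iff.mp h
      rw [Finset.sum_Icc_succ_top (by omega : t+1 ≤ u+1), ih t h']
      simp only [Nat.add_sub_cancel]; ring
    · have : t = u+1 := le_antisymm ht h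
      subst this; simp

/-- Necessary condition for no-arbitrage under model uncertainty with short sales
prohibitions (multi-period): existence of a weak risk neutral nonlinear expectation. -/
theorem no_arbitrage_implies_weak_risk_neutral_multi [Nonempty Ω]
    (T : ℕ) {M : ℕ}
    (F : ℕ → MeasurableSpace Ω)
    (hFmono : ∀ s t : ℕ, s ≤ t → t ≤ T → F s ≤ F t)
    (hF0 : F 0 = ⊥) (hFT : F T = ⊤)
    (S : Fin M → ℕ → Ω → ℝ)
    (hSmeas : ∀ (m : Fin M) (t : ℕ), t ≤ T → Measurable[F t] (S m t))
    (Pfam : Set (Ω → ℝ)) (hPne : Pfam.Nonempty)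
    (hPprob : ∀ P ∈ Pfam, IsProb P)
    (hPpos : ∀ ω : Ω, ∃ P ∈ Pfam, 0 < P ω)
    (hNA : ¬ ∃ (h0 : ℕ → Ω → ℝ) (h : Fin M → ℕ → Ω → ℝ),
        MeasStrategy T F h0 h ∧
          (∀ (m : Fin M) (t : ℕ), 1 ≤ t → t ≤ T → ∀ ω, 0 ≤ h m t ω) ∧
          SelfFinancing T S h0 h ∧ IsArbitrage T S Pfam h0 h) :
    ∃ 𝒬 : Set (Ω → ℝ), 𝒬.Nonempty ∧ (∀ Q ∈ 𝒬, IsProb Q) ∧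
      (∀ ω : Ω, ∃ Q ∈ 𝒬, 0 < Q ω) ∧
      ∀ (m : Fin M) (t u : ℕ), t ≤ u → u ≤ T → ∀ A : Finset Ω,
        MeasurableSet[F t] (A : Set Ω) →
        sInf {x : ℝ | ∃ Q ∈ 𝒬, x = ∑ ω ∈ A, Q ω * (S m u ω - S m t ω)} ≤ 0 := by
  classical
  have key : ∀ (m : Fin M) (t u : ℕ), t ≤ u → u ≤ T → ∃ ω0, S m u ω0 ≤ S m t ω0 := by
    intro m t u htu huT
    by_contra hcon
    push_neg at hcon
    have htlt : t < u := by
      rcases lt_or_eq_of_le htu with h | h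
      · exact h
      · subst h; exact absurd (hcon (Classical.arbitrary Ω)) (lt_irrefl _)
    have hT1 : 1 ≤ T := le_trans (by omega) huT
    apply hNA
    set hval : ℕ → ℝ := fun s => if t < s ∧ s ≤ u then 1 else 0 with hval_def
    set h0f : ℕ → Ω → ℝ := fun s ω =>
      (∑ v ∈ Finset.Icc 1 (s-1), hval v * (S m v ω - S m (v-1) ω)) - hval s * S m (s-1) ω
      with h0f_def
    set hf : Fin M → ℕ → Ω → ℝ := fun m' s _ => if m' = m then hval s else 0 with hf_def
    have hsum_hf : ∀ (s : ℕ) (ω : Ω) (X : Fin M → ℝ),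
        ∑ m', hf m' s ω * X m' = hval s * X m := by
      intro s ω X
      rw [hf_def]
      simp only [ite_mul, zero_mul]
      rw [Finset.sum_ite_eq' Finset.univ m (fun m' => hval s * X m')]
      simp
    have hVT : ∀ ω, Vstar S h0f hf T ω = S m u ω - S m t ω := by
      intro ω
      obtain ⟨k, rfl⟩ : ∃ k, T = k + 1 := ⟨T - 1, by omega⟩
      show h0f (k+1) ω + ∑ m', hf m' (k+1) ω * S m' (k+1) ω = _
      rw [hsum_hf (k+1) ω (fun m' => S m' (k+1) ω), h0f_def]
      simp only [Nat.add_sub_cancel]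
      have : (∑ v ∈ Finset.Icc 1 k, hval v * (S m v ω - S m (v-1) ω))
          - hval (k+1) * S m k ω + hval (k+1) * S m (k+1) ω
          = ∑ v ∈ Finset.Icc 1 (k+1), hval v * (S m v ω - S m (v-1) ω) := by
        rw [Finset.sum_Icc_succ_top (by omega : 1 ≤ k+1)]
        simp only [Nat.add_sub_cancel]
        ring
      rw [this]
      have hfilter : ∑ v ∈ Finset.Icc 1 (k+1), hval v * (S m v ω - S m (v-1) ω)
          = ∑ v ∈ Finset.Icc (t+1) u, (S m v ω - S m (v-1) ω) := by
        rw [hval_def]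
        simp only [ite_mul, one_mul, zero_mul]
        rw [Finset.sum_ite, Finset.sum_const_zero, add_zero]
        congr 1
        ext v
        simp only [Finset.mem_filter, Finset.mem_Icc]
        omega
      rw [hfilter, telescope_sum (fun v => S m v ω) u t htu]
    refine ⟨h0f, hf, ?_, ?_, ?_, ?_, ?_, ?_⟩
    · -- MeasStrategy
      intro s hs hsT
      have hSm : ∀ v, v ≤ s - 1 → Measurable[F (s-1)] (S m v) := by
        intro v hv
        exact (hSmeas m v (le_trans hv (le_trans (Nat.sub_le s 1) hsT))).mono
          (hFmono v (s-1) hv (le_trans (Nat.sub_le s 1) hsT)) le_rfl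
      constructor
      · rw [h0f_def]
        apply Measurable.sub
        · apply Finset.measurable_sum
          intro v hv
          have hv' : v ≤ s - 1 := (Finset.mem_Icc.mp hv).2
          exact measurable_const.mul ((hSm v hv').sub (hSm (v-1) (le_trans (Nat.sub_le v 1) hv')))
        · exact measurable_const.mul (hSm (s-1) le_rfl)
      · intro m'
        exact measurable_const
    · -- nonneg holdings
      intro m' s _ _ ω
      rw [hf_def, hval_def]
      dsimp only
      split_ifs <;> norm_num
    · -- SelfFinancing
      intro s hs hsT ω
      have hdiff : ∑ m', (hf m' (s + 1) ω - hf m' s ω) * S m' s ω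
          = (hval (s+1) - hval s) * S m s ω := by
        rw [hf_def]
        simp only [ite_sub_ite, sub_zero, ite_mul, zero_mul]
        rw [Finset.sum_ite_eq' Finset.univ m]
        simp
      rw [hdiff, h0f_def]
      obtain ⟨k, rfl⟩ : ∃ k, s = k + 1 := ⟨s - 1, by omega⟩
      simp only [Nat.add_sub_cancel]
      rw [Finset.sum_Icc_succ_top (by omega : 1 ≤ k+1)]
      simp only [Nat.add_sub_cancel]
      ring
    · -- V*(0) = 0
      intro ω
      show h0f 1 ω + ∑ m', hf m' 1 ω * S m' 0 ω = 0
      rw [hsum_hf 1 ω (fun m' => S m' 0 ω), h0f_def]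
      simp only [Nat.sub_self]
      rw [show Finset.Icc 1 0 = (∅ : Finset ℕ) from Finset.Icc_eq_empty (by omega)]
      simp
    · -- V*(T) ≥ 0
      intro ω
      rw [hVT ω]
      have := hcon ω
      linarith
    · -- positive expectation
      obtain ⟨P, hP, hPpos0⟩ := hPpos (Classical.arbitrary Ω)
      refine ⟨P, hP, ?_⟩
      show (0:ℝ) < ∑ ω, P ω * Vstar S h0f hf T ω
      apply Finset.sum_pos'
      · intro ω _
        apply mul_nonneg ((hPprob P hP).1 ω)
        rw [hVT ω]; linarith [hcon ω]
      · exact ⟨Classical.arbitrary Ω, Finset.mem_univ _,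
          mul_pos hPpos0 (by rw [hVT]; linarith [hcon (Classical.arbitrary Ω)])⟩
  -- Now take 𝒬 = Dirac measures
  set d : Ω → Ω → ℝ := fun ω0 ω => if ω = ω0 then 1 else 0 with d_def
  refine ⟨Set.range d, ⟨d (Classical.arbitrary Ω), Set.mem_range_self _⟩, ?_, ?_, ?_⟩
  · rintro Q ⟨ω0, rfl⟩
    constructor
    · intro ω; rw [d_def]; dsimp only; split_ifs <;> norm_num
    · rw [d_def]; simp
  · intro ω
    exact ⟨d ω, Set.mem_range_self _, by rw [d_def]; simp⟩
  · intro m t u htu huT A hA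
    obtain ⟨ω0, hω0⟩ := key m t u htu huT
    have hval0 : ∑ ω ∈ A, d ω0 ω * (S m u ω - S m t ω)
        = if ω0 ∈ A then S m u ω0 - S m t ω0 else 0 := by
      rw [d_def]
      simp only [ite_mul, one_mul, zero_mul]
      exact Finset.sum_ite_eq' A ω0 (fun ω => S m u ω - S m t ω)
    have hmem : (if ω0 ∈ A then S m u ω0 - S m t ω0 else 0)
        ∈ {x : ℝ | ∃ Q ∈ Set.range d, x = ∑ ω ∈ A, Q ω * (S m u ω - S m t ω)} :=
      ⟨d ω0, Set.mem_range_self _, hval0.symm⟩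
    have hbdd : BddBelow {x : ℝ | ∃ Q ∈ Set.range d, x = ∑ ω ∈ A, Q ω * (S m u ω - S m t ω)} := by
      have hfin : {x : ℝ | ∃ Q ∈ Set.range d, x = ∑ ω ∈ A, Q ω * (S m u ω - S m t ω)}.Finite := by
        have : {x : ℝ | ∃ Q ∈ Set.range d, x = ∑ ω ∈ A, Q ω * (S m u ω - S m t ω)}
            = (fun Q : Ω → ℝ => ∑ ω ∈ A, Q ω * (S m u ω - S m t ω)) '' Set.range d := by
          ext x
          simp only [Set.mem_setOf_eq, Set.mem_image]
          constructor
          · rintro ⟨Q, hQ, rfl⟩; exact ⟨Q, hQ, rfl⟩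
          · rintro ⟨Q, hQ, rfl⟩; exact ⟨Q, hQ, rfl⟩
        rw [this]
        exact (Set.finite_range d).image _
      exact hfin.bddBelow
    refine le_trans (csInf_le hbdd hmem) ?_
    split_ifs
    · linarith
    · exact le_refl 0
end

section
/- Sufficient condition for no-arbitrage under model uncertainty with short sales prohibitions (multi-period): if there exists a strong risk neutral nonlinear expectation, i.e. a nonempty family 𝒬 of probability measures on Ω such that for every ω ∈ Ω there is some Q ∈ 𝒬 with Q(ω) > 0, and every Q ∈ 𝒬 is a supermartingale measure, then no self-financing trading strategy with h_m(t)(ω) ≥ 0 for all m = 1,…,M, t = 1,…,T, ω ∈ Ω is an arbitrage under model uncertainty. -/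
open Finset MeasureTheory

variable {Ω : Type*} [Fintype Ω]

lemma key_fiber {Ω : Type*} [Fintype Ω] (G : MeasurableSpace Ω) (Q f g : Ω → ℝ)
    (hf0 : ∀ ω, 0 ≤ f ω) (hfm : Measurable[G] f)
    (hg : ∀ A : Finset Ω, MeasurableSet[G] (A : Set Ω) → ∑ ω ∈ A, Q ω * g ω ≤ 0) :
    ∑ ω, Q ω * (f ω * g ω) ≤ 0 := by
  classical
  have hsplit : ∑ ω, Q ω * (f ω * g ω)
      = ∑ a ∈ Finset.univ.image f, ∑ ω ∈ Finset.univ.filter (fun ω => f ω = a),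
          Q ω * (f ω * g ω) :=
    (Finset.sum_fiberwise_of_maps_to
      (fun ω _ => Finset.mem_image_of_mem f (Finset.mem_univ ω)) _).symm
  rw [hsplit]
  apply Finset.sum_nonpos
  intro a ha
  obtain ⟨ω0, -, rfl⟩ := Finset.mem_image.mp ha
  have hmeasA : MeasurableSet[G]
      ((Finset.univ.filter (fun ω => f ω = f ω0) : Finset Ω) : Set Ω) := by
    have hset : ((Finset.univ.filter (fun ω => f ω = f ω0) : Finset Ω) : Set Ω)
        = f ⁻¹' {f ω0} := by
      ext x; simp
    rw [hset]
    exact hfm (measurableSet_singleton _)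
  have hsum : ∑ ω ∈ Finset.univ.filter (fun ω => f ω = f ω0), Q ω * (f ω * g ω)
      = f ω0 * ∑ ω ∈ Finset.univ.filter (fun ω => f ω = f ω0), Q ω * g ω := by
    rw [Finset.mul_sum]
    apply Finset.sum_congr rfl
    intro x hx
    have hfx : f x = f ω0 := (Finset.mem_filter.mp hx).2
    rw [hfx]; ring
  rw [hsum]
  exact mul_nonpos_of_nonneg_of_nonpos (hf0 ω0) (hg _ hmeasA)

/-- Sufficient condition for no-arbitrage under model uncertainty with short sales
prohibitions (multi-period): a strong risk neutral nonlinear expectation, i.e. a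
family of probability measures each of which is a supermartingale measure,
rules out arbitrage. -/
theorem strong_risk_neutral_implies_no_arbitrage_multi [Nonempty Ω]
    (T : ℕ) {M : ℕ}
    (F : ℕ → MeasurableSpace Ω)
    (hFmono : ∀ s t : ℕ, s ≤ t → t ≤ T → F s ≤ F t)
    (hF0 : F 0 = ⊥) (hFT : F T = ⊤)
    (S : Fin M → ℕ → Ω → ℝ)
    (hSmeas : ∀ (m : Fin M) (t : ℕ), t ≤ T → Measurable[F t] (S m t))
    (Pfam : Set (Ω → ℝ)) (hPne : Pfam.Nonempty)
    (hPprob : ∀ P ∈ Pfam, IsProb P)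
    (hPpos : ∀ ω : Ω, ∃ P ∈ Pfam, 0 < P ω)
    (𝒬 : Set (Ω → ℝ)) (h𝒬ne : 𝒬.Nonempty)
    (h𝒬prob : ∀ Q ∈ 𝒬, IsProb Q)
    (h𝒬pos : ∀ ω : Ω, ∃ Q ∈ 𝒬, 0 < Q ω)
    (h𝒬super : ∀ Q ∈ 𝒬, IsSupermartingaleMeasure T F S Q) :
    ¬ ∃ (h0 : ℕ → Ω → ℝ) (h : Fin M → ℕ → Ω → ℝ),
        MeasStrategy T F h0 h ∧
          (∀ (m : Fin M) (t : ℕ), 1 ≤ t → t ≤ T → ∀ ω, 0 ≤ h m t ω) ∧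
          SelfFinancing T S h0 h ∧ IsArbitrage T S Pfam h0 h := by
  rintro ⟨h0, h, hmeasS, hnn, hsf, harb⟩
  obtain ⟨hV0, hVT, P, hP, hEP⟩ := harb
  classical
  -- V*(t) = G*(t) for all t ≤ T
  have hVG : ∀ t, t ≤ T → ∀ ω, Vstar S h0 h t ω = Gstar S h t ω := by
    intro t
    induction t with
    | zero =>
      intro _ ω
      rw [hV0 ω]
      simp [Gstar]
    | succ t ih =>
      intro ht ω
      have ht' : t ≤ T := Nat.le_of_succ_le ht
      have hG : Gstar S h (t + 1) ω
          = Gstar S h t ω + ∑ m, h m (t + 1) ω * (S m (t + 1) ω - S m t ω) := by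
        simp only [Gstar]
        rw [← Finset.sum_add_distrib]
        apply Finset.sum_congr rfl
        intro m _
        rw [Finset.sum_Icc_succ_top (by omega : 1 ≤ t + 1)]
        simp
      rcases Nat.eq_zero_or_pos t with h0t | h1t
      · subst h0t
        have hv0 : h0 1 ω + ∑ m, h m 1 ω * S m 0 ω = 0 := hV0 ω
        have hG1 : Gstar S h 1 ω = ∑ m, h m 1 ω * (S m 1 ω - S m 0 ω) := by
          simp [Gstar]
        have hv1 : Vstar S h0 h (0 + 1) ω = h0 1 ω + ∑ m, h m 1 ω * S m 1 ω := rfl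
        have hG1' : Gstar S h (0 + 1) ω = ∑ m, h m 1 ω * (S m 1 ω - S m 0 ω) := hG1
        rw [hv1, hG1']
        have hs : ∑ m, h m 1 ω * (S m 1 ω - S m 0 ω)
            = ∑ m, h m 1 ω * S m 1 ω - ∑ m, h m 1 ω * S m 0 ω := by
          rw [← Finset.sum_sub_distrib]
          apply Finset.sum_congr rfl
          intros; ring
        rw [hs]; linarith
      · have hvt := ih ht' ω
        have hsf' := hsf t h1t ht ω
        simp only [Vstar, if_neg (Nat.succ_ne_zero t),
          if_neg (Nat.pos_iff_ne_zero.mp h1t)] at hvt ⊢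
        rw [hG, ← hvt]
        have e1 : ∑ m, (h m (t + 1) ω - h m t ω) * S m t ω
            = ∑ m, h m (t + 1) ω * S m t ω - ∑ m, h m t ω * S m t ω := by
          rw [← Finset.sum_sub_distrib]
          apply Finset.sum_congr rfl
          intros; ring
        have e2 : ∑ m, h m (t + 1) ω * (S m (t + 1) ω - S m t ω)
            = ∑ m, h m (t + 1) ω * S m (t + 1) ω - ∑ m, h m (t + 1) ω * S m t ω := by
          rw [← Finset.sum_sub_distrib]
          apply Finset.sum_congr rfl
          intros; ring
        rw [e1] at hsf'
        linarith
  -- V*(T) is strictly positive somewhere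
  obtain ⟨ω0, hω0⟩ : ∃ ω, 0 < Vstar S h0 h T ω := by
    by_contra hc
    push_neg at hc
    have hzero : ∀ ω, Vstar S h0 h T ω = 0 := fun ω => le_antisymm (hc ω) (hVT ω)
    have : _root_.expect P (Vstar S h0 h T) = 0 := by simp [_root_.expect, hzero]
    linarith
  obtain ⟨Q, hQ, hQpos⟩ := h𝒬pos ω0
  obtain ⟨hQ0, -⟩ := h𝒬prob Q hQ
  have hpos : 0 < _root_.expect Q (Vstar S h0 h T) := by
    have hterms : ∀ ω ∈ Finset.univ, 0 ≤ Q ω * Vstar S h0 h T ω :=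
      fun ω _ => mul_nonneg (hQ0 ω) (hVT ω)
    have h1 : Q ω0 * Vstar S h0 h T ω0 ≤ _root_.expect Q (Vstar S h0 h T) :=
      Finset.single_le_sum hterms (Finset.mem_univ ω0)
    nlinarith [mul_pos hQpos hω0]
  have hneg : _root_.expect Q (Vstar S h0 h T) ≤ 0 := by
    have hEq : _root_.expect Q (Vstar S h0 h T)
        = ∑ m, ∑ u ∈ Finset.Icc 1 T, ∑ ω, Q ω * (h m u ω * (S m u ω - S m (u - 1) ω)) := by
      simp only [_root_.expect, hVG T le_rfl, Gstar, Finset.mul_sum]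
      rw [Finset.sum_comm]
      apply Finset.sum_congr rfl
      intro m _
      rw [Finset.sum_comm]
    rw [hEq]
    apply Finset.sum_nonpos
    intro m _
    apply Finset.sum_nonpos
    intro u hu
    obtain ⟨hu1, huT⟩ := Finset.mem_Icc.mp hu
    apply key_fiber (F (u - 1)) Q (h m u) (fun ω => S m u ω - S m (u - 1) ω)
      (fun ω => hnn m u hu1 huT ω) ((hmeasS u hu1 huT).2 m)
    intro A hA
    have hsup := h𝒬super Q hQ m (u - 1) u (by omega) huT A hA
    have hd : ∑ ω ∈ A, Q ω * (S m u ω - S m (u - 1) ω)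
        = ∑ ω ∈ A, Q ω * S m u ω - ∑ ω ∈ A, Q ω * S m (u - 1) ω := by
      rw [← Finset.sum_sub_distrib]
      apply Finset.sum_congr rfl
      intros; ring
    rw [hd]; linarith
  linarith
end

section
/- Multi-period risk neutral valuation under model uncertainty: if Q is a martingale measure with Q(ω) > 0 for every ω ∈ Ω and H is a self-financing trading strategy, then for every 0 ≤ t ≤ T and every A ∈ ℱ_t, Σ_{ω∈A} Q(ω) V*(T)(ω) = Σ_{ω∈A} Q(ω) V*(t)(ω); that is, V*(t) = E_Q[V*(T) | ℱ_t]. In particular V*(0) = E_Q[V*(T)]. -/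
open Finset MeasureTheory

variable {Ω : Type*} [Fintype Ω]

/-- Summing a product `g * f` over a measurable set vanishes when `g` is measurable
and `f` sums to zero over every measurable set. -/
lemma sum_mul_eq_zero_of_meas {F : MeasurableSpace Ω} (g f : Ω → ℝ)
    (hg : Measurable[F] g)
    (hf : ∀ B : Finset Ω, MeasurableSet[F] (B : Set Ω) → ∑ ω ∈ B, f ω = 0)
    (A : Finset Ω) (hA : MeasurableSet[F] (A : Set Ω)) :
    ∑ ω ∈ A, g ω * f ω = 0 := by
  classical
  rw [← Finset.sum_fiberwise_of_maps_to (g := g) (t := A.image g)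
      (fun x hx => Finset.mem_image_of_mem g hx)]
  refine Finset.sum_eq_zero fun c _ => ?_
  have hfib : (↑(A.filter fun ω => g ω = c) : Set Ω) = ↑A ∩ g ⁻¹' {c} := by
    ext ω; simp [Finset.mem_filter]
  have hBsum : ∑ ω ∈ A.filter (fun ω => g ω = c), f ω = 0 := by
    apply hf
    rw [hfib]
    exact hA.inter (hg (measurableSet_singleton c))
  calc ∑ ω ∈ A.filter (fun ω => g ω = c), g ω * f ω
      = ∑ ω ∈ A.filter (fun ω => g ω = c), c * f ω := by
        refine Finset.sum_congr rfl fun ω hω => ?_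
        rw [(Finset.mem_filter.mp hω).2]
    _ = c * ∑ ω ∈ A.filter (fun ω => g ω = c), f ω := by rw [Finset.mul_sum]
    _ = 0 := by rw [hBsum, mul_zero]

/-- Multi-period risk neutral valuation under model uncertainty:
`V*(t) = E_Q[V*(T) ∣ ℱ_t]`, and in particular `V*(0) = E_Q[V*(T)]`. -/
theorem multi_period_risk_neutral_valuation [Nonempty Ω]
    (T : ℕ) {M : ℕ}
    (F : ℕ → MeasurableSpace Ω)
    (hFmono : ∀ s t : ℕ, s ≤ t → t ≤ T → F s ≤ F t)
    (hF0 : F 0 = ⊥) (hFT : F T = ⊤)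
    (S : Fin M → ℕ → Ω → ℝ)
    (hSmeas : ∀ (m : Fin M) (t : ℕ), t ≤ T → Measurable[F t] (S m t))
    (Q : Ω → ℝ) (hQ : IsProb Q) (hQpos : ∀ ω, 0 < Q ω)
    (hQmart : IsMartingaleMeasure T F S Q)
    (h0 : ℕ → Ω → ℝ) (h : Fin M → ℕ → Ω → ℝ)
    (hmeas : MeasStrategy T F h0 h)
    (hsf : SelfFinancing T S h0 h) :
    (∀ t : ℕ, t ≤ T → ∀ A : Finset Ω, MeasurableSet[F t] (A : Set Ω) →
        ∑ ω ∈ A, Q ω * Vstar S h0 h T ω = ∑ ω ∈ A, Q ω * Vstar S h0 h t ω) ∧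
      ∀ ω, Vstar S h0 h 0 ω = expect Q (Vstar S h0 h T) := by
    classical
  obtain ⟨hQnn, hQsum⟩ := hQ
  -- constancy of ⊥-measurable functions
  have const_of_bot : ∀ f : Ω → ℝ, Measurable[(⊥ : MeasurableSpace Ω)] f →
      ∀ ω ω' : Ω, f ω = f ω' := by
    intro f hf ω ω'
    have hm := hf (measurableSet_singleton (f ω))
    rw [MeasurableSpace.measurableSet_bot_iff] at hm
    rcases hm with hm | hm
    · exact absurd (show ω ∈ f ⁻¹' {f ω} by simp) (by simp [hm])
    · have : ω' ∈ f ⁻¹' {f ω} := hm ▸ Set.mem_univ ω'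
      exact (Set.mem_singleton_iff.mp this).symm
  -- one-step martingale property of the value process
  have step : ∀ t : ℕ, t + 1 ≤ T → ∀ A : Finset Ω, MeasurableSet[F t] (A : Set Ω) →
      ∑ ω ∈ A, Q ω * Vstar S h0 h (t + 1) ω = ∑ ω ∈ A, Q ω * Vstar S h0 h t ω := by
    intro t ht A hA
    have hdiff : ∀ ω, Vstar S h0 h (t + 1) ω - Vstar S h0 h t ω
        = ∑ m, h m (t + 1) ω * (S m (t + 1) ω - S m t ω) := by
      intro ω
      have e2 : ∑ m, h m (t + 1) ω * (S m (t + 1) ω - S m t ω)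
          = (∑ m, h m (t + 1) ω * S m (t + 1) ω) - ∑ m, h m (t + 1) ω * S m t ω := by
        simp [mul_sub, Finset.sum_sub_distrib]
      by_cases h0t : t = 0
      · subst h0t
        simp only [Nat.zero_add] at e2
        have v1 : Vstar S h0 h (0 + 1) ω = h0 1 ω + ∑ m, h m 1 ω * S m 1 ω := by
          simp [Vstar]
        have v0 : Vstar S h0 h 0 ω = h0 1 ω + ∑ m, h m 1 ω * S m 0 ω := by
          simp [Vstar]
        rw [v1, v0, show (0:ℕ) + 1 = 1 from rfl, e2]; ring
      · have hsf' := hsf t (Nat.one_le_iff_ne_zero.mpr h0t) ht ω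
        have e1 : ∑ m, (h m (t + 1) ω - h m t ω) * S m t ω
            = (∑ m, h m (t + 1) ω * S m t ω) - ∑ m, h m t ω * S m t ω := by
          simp [sub_mul, Finset.sum_sub_distrib]
        rw [e1] at hsf'
        simp only [Vstar, if_neg h0t, if_neg (Nat.succ_ne_zero t)]
        rw [e2]; linarith
    have hzero : ∑ ω ∈ A, Q ω * Vstar S h0 h (t + 1) ω
        - ∑ ω ∈ A, Q ω * Vstar S h0 h t ω = 0 := by
      rw [← Finset.sum_sub_distrib]
      calc ∑ ω ∈ A, (Q ω * Vstar S h0 h (t + 1) ω - Q ω * Vstar S h0 h t ω)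
          = ∑ ω ∈ A, ∑ m, h m (t + 1) ω * (Q ω * (S m (t + 1) ω - S m t ω)) := by
            refine Finset.sum_congr rfl fun ω _ => ?_
            rw [← mul_sub, hdiff ω, Finset.mul_sum]
            exact Finset.sum_congr rfl fun m _ => by ring
        _ = ∑ m, ∑ ω ∈ A, h m (t + 1) ω * (Q ω * (S m (t + 1) ω - S m t ω)) :=
            Finset.sum_comm
        _ = 0 := by
            refine Finset.sum_eq_zero fun m _ => ?_
            have hg : Measurable[F t] (h m (t + 1)) := by
              have := (hmeas (t + 1) (by omega) (by omega)).2 m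
              simpa using this
            refine sum_mul_eq_zero_of_meas _ _ hg ?_ A hA
            intro B hB
            have hmart := hQmart m t (t + 1) (Nat.le_succ t) ht B hB
            simp [mul_sub, Finset.sum_sub_distrib, hmart]
    linarith
  -- main conditional expectation statement, by backwards induction
  have main : ∀ d t : ℕ, t + d = T → ∀ A : Finset Ω, MeasurableSet[F t] (A : Set Ω) →
      ∑ ω ∈ A, Q ω * Vstar S h0 h T ω = ∑ ω ∈ A, Q ω * Vstar S h0 h t ω := by
    intro d
    induction d with
    | zero => intro t htT A hA; rw [show T = t by omega]
    | succ d ih =>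
        intro t htT A hA
        have hA' : MeasurableSet[F (t + 1)] (A : Set Ω) :=
          hFmono t (t + 1) (Nat.le_succ t) (by omega) _ hA
        rw [ih (t + 1) (by omega) A hA', step t (by omega) A hA]
  refine ⟨fun t ht A hA => main (T - t) t (by omega) A hA, ?_⟩
  -- V*(0) is constant
  have hconst : ∀ ω ω' : Ω, Vstar S h0 h 0 ω = Vstar S h0 h 0 ω' := by
    rcases Nat.eq_zero_or_pos T with hT0 | hT1
    · have hsub : ∀ ω ω' : Ω, ω = ω' := by
        intro ω ω'
        have htop : (⊥ : MeasurableSpace Ω) = ⊤ := by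
          rw [← hF0]; rw [hT0] at hFT; exact hFT
        have hm : MeasurableSet[(⊥ : MeasurableSpace Ω)] ({ω} : Set Ω) := by
          rw [htop]; exact trivial
        rw [MeasurableSpace.measurableSet_bot_iff] at hm
        rcases hm with hm | hm
        · exact absurd (Set.mem_singleton ω) (by simp [hm])
        · exact (Set.mem_singleton_iff.mp (hm ▸ Set.mem_univ ω')).symm
      intro ω ω'; rw [hsub ω ω']
    · intro ω ω'
      apply const_of_bot
      have hmeas1 := hmeas 1 le_rfl hT1
      have hh0 : Measurable[F 0] (h0 1) := by simpa using hmeas1.1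
      have hh : ∀ m, Measurable[F 0] (h m 1) := fun m => by simpa using hmeas1.2 m
      have hV : Measurable[F 0] (Vstar S h0 h 0) := by
        have : Vstar S h0 h 0 = fun ω => h0 1 ω + ∑ m, h m 1 ω * S m 0 ω := by
          funext ω; simp [Vstar]
        rw [this]
        exact hh0.add (Finset.measurable_sum _ fun m _ =>
          (hh m).mul (hSmeas m 0 (by omega)))
      rwa [hF0] at hV
  intro ω
  have huniv : MeasurableSet[F 0] ((Finset.univ : Finset Ω) : Set Ω) := by
    simp
  have := main T 0 (by omega) Finset.univ huniv
  rw [_root_.expect, this]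
  calc Vstar S h0 h 0 ω = (∑ ω', Q ω') * Vstar S h0 h 0 ω := by rw [hQsum, one_mul]
    _ = ∑ ω', Q ω' * Vstar S h0 h 0 ω := by rw [Finset.sum_mul]
    _ = ∑ ω', Q ω' * Vstar S h0 h 0 ω' :=
        Finset.sum_congr rfl fun ω' _ => by rw [hconst ω ω']
end

section
/- Multi-period risk neutral valuation with short sales prohibitions: if Q is a supermartingale measure and H is a self-financing trading strategy with h_m(t)(ω) ≥ 0 for all m = 1,…,M, t = 1,…,T, ω ∈ Ω, then for every 0 ≤ t ≤ T and every A ∈ ℱ_t, Σ_{ω∈A} Q(ω) V*(T)(ω) ≤ Σ_{ω∈A} Q(ω) V*(t)(ω); that is, E_Q[V*(T) | ℱ_t] ≤ V*(t). In particular V*(0) ≥ E_Q[V*(T)]. -/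
/-!
By self-financing, the one-step change of the value process is the gain
`∑ m, h m (t+1) * (S m (t+1) - S m t)`. The holding `h m (t+1)` is nonnegative and
`ℱ_t`-measurable, so the supermartingale inequality for `S m` on `ℱ_t`-sets survives
multiplication by it; hence `V*` is itself a `Q`-supermartingale, and the valuation bound
follows by chaining the one-step inequalities backwards from `T`. At `t = 0` the value
`V*(0)` is constant because `ℱ_0` is trivial.
-/

open Finset MeasureTheory

variable {Ω : Type*} [Fintype Ω]

theorem sum_mul_mul_nonpos_of_measurable {α : Type*} {m : MeasurableSpace α} {Q D g : α → ℝ}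
    (hg : Measurable[m] g) (hg0 : ∀ ω, 0 ≤ g ω)
    (hD : ∀ B : Finset α, MeasurableSet[m] (B : Set α) → ∑ ω ∈ B, Q ω * D ω ≤ 0)
    {A : Finset α} (hA : MeasurableSet[m] (A : Set α)) :
    ∑ ω ∈ A, Q ω * (g ω * D ω) ≤ 0 := by
  classical
  -- On each level set `{g = c}` of `g` inside `A` the weight `g` factors out as `c ≥ 0`.
  rw [← sum_fiberwise_of_maps_to (g := g) (t := A.image g) fun _ ↦ mem_image_of_mem g]
  refine sum_nonpos fun c hc ↦ ?_
  obtain ⟨ω₀, -, rfl⟩ := mem_image.mp hc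
  have hfiber : MeasurableSet[m] ((A.filter fun ω ↦ g ω = g ω₀ : Finset α) : Set α) := by
    rw [coe_filter]
    exact hA.inter (hg (measurableSet_singleton (g ω₀)))
  calc ∑ ω ∈ A.filter (fun ω ↦ g ω = g ω₀), Q ω * (g ω * D ω)
      = g ω₀ * ∑ ω ∈ A.filter (fun ω ↦ g ω = g ω₀), Q ω * D ω := by
        rw [mul_sum]
        refine sum_congr rfl fun ω hω ↦ ?_
        rw [(mem_filter.mp hω).2]
        ring
    _ ≤ 0 := mul_nonpos_of_nonneg_of_nonpos (hg0 ω₀) (hD _ hfiber)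

theorem sum_mul_le_of_one_step_le {α : Type*} {T : ℕ} {F : ℕ → MeasurableSpace α}
    (hFmono : ∀ s t : ℕ, s ≤ t → t ≤ T → F s ≤ F t) {Q : α → ℝ} {X : ℕ → α → ℝ}
    (hstep : ∀ t : ℕ, t + 1 ≤ T → ∀ A : Finset α, MeasurableSet[F t] (A : Set α) →
      ∑ ω ∈ A, Q ω * X (t + 1) ω ≤ ∑ ω ∈ A, Q ω * X t ω)
    {t : ℕ} (ht : t ≤ T) {A : Finset α} (hA : MeasurableSet[F t] (A : Set α)) :
    ∑ ω ∈ A, Q ω * X T ω ≤ ∑ ω ∈ A, Q ω * X t ω := by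
  refine Nat.decreasingInduction' (fun s hsT hts ih ↦ ?_) ht le_rfl
  exact ih.trans (hstep s hsT A (hFmono t s hts hsT.le A hA))

theorem Vstar_succ_sub {Ω : Type*} {M T : ℕ} {S : Fin M → ℕ → Ω → ℝ} {h0 : ℕ → Ω → ℝ}
    {h : Fin M → ℕ → Ω → ℝ} (hsf : SelfFinancing T S h0 h) {t : ℕ} (ht : t + 1 ≤ T) (ω : Ω) :
    Vstar S h0 h (t + 1) ω - Vstar S h0 h t ω
      = ∑ m, h m (t + 1) ω * (S m (t + 1) ω - S m t ω) := by
  simp only [mul_sub, sum_sub_distrib]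
  rcases t with _ | t
  · simp [Vstar]
  · have hrebalance := hsf (t + 1) (by omega) ht ω
    simp only [sub_mul, sum_sub_distrib] at hrebalance
    simp only [Vstar, Nat.add_one_ne_zero, if_false]
    linarith

theorem sum_mul_Vstar_succ_le {Ω : Type*} {M T : ℕ} {F : ℕ → MeasurableSpace Ω}
    {S : Fin M → ℕ → Ω → ℝ} {Q : Ω → ℝ} {h0 : ℕ → Ω → ℝ} {h : Fin M → ℕ → Ω → ℝ}
    (hQsuper : IsSupermartingaleMeasure T F S Q) (hmeas : MeasStrategy T F h0 h)
    (hshort : ∀ (m : Fin M) (t : ℕ), 1 ≤ t → t ≤ T → ∀ ω, 0 ≤ h m t ω)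
    (hsf : SelfFinancing T S h0 h) {t : ℕ} (ht : t + 1 ≤ T)
    {A : Finset Ω} (hA : MeasurableSet[F t] (A : Set Ω)) :
    ∑ ω ∈ A, Q ω * Vstar S h0 h (t + 1) ω ≤ ∑ ω ∈ A, Q ω * Vstar S h0 h t ω := by
  have hincrement (m : Fin M) (B : Finset Ω) (hB : MeasurableSet[F t] (B : Set Ω)) :
      ∑ ω ∈ B, Q ω * (S m (t + 1) ω - S m t ω) ≤ 0 := by
    simp only [mul_sub, sum_sub_distrib]
    exact sub_nonpos.2 (hQsuper m t (t + 1) t.le_succ ht B hB)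
  have hgain : ∑ ω ∈ A, Q ω * (Vstar S h0 h (t + 1) ω - Vstar S h0 h t ω) ≤ 0 := by
    simp only [Vstar_succ_sub hsf ht, mul_sum]
    rw [sum_comm]
    exact sum_nonpos fun m _ ↦ sum_mul_mul_nonpos_of_measurable
      ((hmeas (t + 1) (by omega) ht).2 m) (hshort m (t + 1) (by omega) ht) (hincrement m) hA
  simpa only [mul_sub, sum_sub_distrib, sub_nonpos] using hgain

theorem measurable_Vstar_zero {Ω : Type*} {M T : ℕ} {F : ℕ → MeasurableSpace Ω}
    {S : Fin M → ℕ → Ω → ℝ} {h0 : ℕ → Ω → ℝ} {h : Fin M → ℕ → Ω → ℝ} (hFT : F T = ⊤)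
    (hSmeas : ∀ (m : Fin M) (t : ℕ), t ≤ T → Measurable[F t] (S m t))
    (hmeas : MeasStrategy T F h0 h) :
    Measurable[F 0] (Vstar S h0 h 0) := by
  rcases Nat.eq_zero_or_pos T with rfl | hT
  · rw [hFT]
    exact measurable_from_top
  · obtain ⟨hh0, hh⟩ := hmeas 1 le_rfl hT
    show Measurable[F 0] fun ω ↦ h0 1 ω + ∑ m, h m 1 ω * S m 0 ω
    exact hh0.add (Finset.measurable_sum _ fun m _ ↦ (hh m).mul (hSmeas m 0 T.zero_le))

theorem IsProb.expect_const {Q : Ω → ℝ} (hQ : IsProb Q) (c : ℝ) : _root_.expect Q (fun _ ↦ c) = c := by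
  rw [_root_.expect, ← sum_mul, hQ.2, one_mul]

theorem multi_period_risk_neutral_valuation_short_sales_general
    (T : ℕ) {M : ℕ}
    (F : ℕ → MeasurableSpace Ω)
    (hFmono : ∀ s t : ℕ, s ≤ t → t ≤ T → F s ≤ F t)
    (hF0 : F 0 = ⊥) (hFT : F T = ⊤)
    (S : Fin M → ℕ → Ω → ℝ)
    (hSmeas : ∀ (m : Fin M) (t : ℕ), t ≤ T → Measurable[F t] (S m t))
    (Q : Ω → ℝ) (hQ : IsProb Q)
    (hQsuper : IsSupermartingaleMeasure T F S Q)
    (h0 : ℕ → Ω → ℝ) (h : Fin M → ℕ → Ω → ℝ)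
    (hmeas : MeasStrategy T F h0 h)
    (hshort : ∀ (m : Fin M) (t : ℕ), 1 ≤ t → t ≤ T → ∀ ω, 0 ≤ h m t ω)
    (hsf : SelfFinancing T S h0 h) :
    (∀ t : ℕ, t ≤ T → ∀ A : Finset Ω, MeasurableSet[F t] (A : Set Ω) →
        ∑ ω ∈ A, Q ω * Vstar S h0 h T ω ≤ ∑ ω ∈ A, Q ω * Vstar S h0 h t ω) ∧
      ∀ ω, expect Q (Vstar S h0 h T) ≤ Vstar S h0 h 0 ω := by
  have hvaluation (t : ℕ) (ht : t ≤ T) (A : Finset Ω) (hA : MeasurableSet[F t] (A : Set Ω)) :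
      ∑ ω ∈ A, Q ω * Vstar S h0 h T ω ≤ ∑ ω ∈ A, Q ω * Vstar S h0 h t ω :=
    sum_mul_le_of_one_step_le hFmono
      (fun _ hs _ hB ↦ sum_mul_Vstar_succ_le hQsuper hmeas hshort hsf hs hB) ht hA
  refine ⟨hvaluation, fun ω ↦ ?_⟩
  obtain ⟨c, hc⟩ := eq_const_of_measurable_bot (hF0 ▸ measurable_Vstar_zero hFT hSmeas hmeas)
  have hinitial := hvaluation 0 T.zero_le univ (by simp)
  rw [hc] at hinitial ⊢
  exact hinitial.trans_eq (hQ.expect_const c)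

/-- Multi-period risk neutral valuation with short sales prohibitions:
`E_Q[V*(T) ∣ ℱ_t] ≤ V*(t)`, and in particular `V*(0) ≥ E_Q[V*(T)]`. -/
theorem multi_period_risk_neutral_valuation_short_sales [Nonempty Ω]
    (T : ℕ) {M : ℕ}
    (F : ℕ → MeasurableSpace Ω)
    (hFmono : ∀ s t : ℕ, s ≤ t → t ≤ T → F s ≤ F t)
    (hF0 : F 0 = ⊥) (hFT : F T = ⊤)
    (S : Fin M → ℕ → Ω → ℝ)
    (hSmeas : ∀ (m : Fin M) (t : ℕ), t ≤ T → Measurable[F t] (S m t))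
    (Q : Ω → ℝ) (hQ : IsProb Q)
    (hQsuper : IsSupermartingaleMeasure T F S Q)
    (h0 : ℕ → Ω → ℝ) (h : Fin M → ℕ → Ω → ℝ)
    (hmeas : MeasStrategy T F h0 h)
    (hshort : ∀ (m : Fin M) (t : ℕ), 1 ≤ t → t ≤ T → ∀ ω, 0 ≤ h m t ω)
    (hsf : SelfFinancing T S h0 h) :
    (∀ t : ℕ, t ≤ T → ∀ A : Finset Ω, MeasurableSet[F t] (A : Set Ω) →
        ∑ ω ∈ A, Q ω * Vstar S h0 h T ω ≤ ∑ ω ∈ A, Q ω * Vstar S h0 h t ω) ∧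
      ∀ ω, expect Q (Vstar S h0 h T) ≤ Vstar S h0 h 0 ω :=
  multi_period_risk_neutral_valuation_short_sales_general T F hFmono hF0 hFT S hSmeas Q hQ hQsuper
    h0 h hmeas hshort hsf
end

section
/- Expected discounted gain under a martingale measure: if Q is a martingale measure, then for every trading strategy H (with each h_m(u) being ℱ_{u−1}-measurable), the total discounted gain satisfies E_Q[Σ_{m=1}^M Σ_{u=1}^T h_m(u) ΔS*_m(u)] = 0. -/
open Finset MeasureTheory

variable {Ω : Type*} [Fintype Ω]

open Classical in
lemma key_zero {Ω : Type*} [Fintype Ω] (mF : MeasurableSpace Ω)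
    (Q f g1 g2 : Ω → ℝ) (hf : Measurable[mF] f)
    (hmg : ∀ A : Finset Ω, MeasurableSet[mF] (A : Set Ω) →
      ∑ ω ∈ A, Q ω * g1 ω = ∑ ω ∈ A, Q ω * g2 ω) :
    ∑ ω, Q ω * (f ω * (g1 ω - g2 ω)) = 0 := by
  rw [← Finset.sum_fiberwise_of_maps_to
    (g := f) (t := Finset.univ.image f)
    (fun ω _ => Finset.mem_image_of_mem f (Finset.mem_univ ω))]
  refine Finset.sum_eq_zero fun c _ => ?_
  have hA : MeasurableSet[mF]
      ((Finset.univ.filter (fun ω => f ω = c) : Finset Ω) : Set Ω) := by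
    have : ((Finset.univ.filter (fun ω => f ω = c) : Finset Ω) : Set Ω)
        = f ⁻¹' {c} := by
      ext ω; simp
    rw [this]
    exact hf (measurableSet_singleton c)
  have hsum := hmg _ hA
  calc ∑ ω ∈ Finset.univ.filter (fun ω => f ω = c), Q ω * (f ω * (g1 ω - g2 ω))
      = ∑ ω ∈ Finset.univ.filter (fun ω => f ω = c),
          (c * (Q ω * g1 ω) - c * (Q ω * g2 ω)) := by
        refine Finset.sum_congr rfl fun ω hω => ?_
        have : f ω = c := (Finset.mem_filter.mp hω).2
        rw [this]; ring
    _ = c * (∑ ω ∈ Finset.univ.filter (fun ω => f ω = c), Q ω * g1 ω)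
        - c * (∑ ω ∈ Finset.univ.filter (fun ω => f ω = c), Q ω * g2 ω) := by
        rw [Finset.sum_sub_distrib, Finset.mul_sum, Finset.mul_sum]
    _ = 0 := by rw [hsum]; ring

/-- Expected discounted gain under a martingale measure:
`E_Q[∑ m, ∑ u = 1..T, h m u * ΔS*_m(u)] = 0`. -/
theorem expected_gain_martingale [Nonempty Ω]
    (T : ℕ) {M : ℕ}
    (F : ℕ → MeasurableSpace Ω)
    (hFmono : ∀ s t : ℕ, s ≤ t → t ≤ T → F s ≤ F t)
    (hF0 : F 0 = ⊥) (hFT : F T = ⊤)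
    (S : Fin M → ℕ → Ω → ℝ)
    (hSmeas : ∀ (m : Fin M) (t : ℕ), t ≤ T → Measurable[F t] (S m t))
    (Q : Ω → ℝ) (hQ : IsProb Q)
    (hQmart : IsMartingaleMeasure T F S Q)
    (h0 : ℕ → Ω → ℝ) (h : Fin M → ℕ → Ω → ℝ)
    (hmeas : MeasStrategy T F h0 h) :
    expect Q (Gstar S h T) = 0 := by
  unfold _root_.expect Gstar
  simp_rw [Finset.mul_sum]
  rw [Finset.sum_comm]
  refine Finset.sum_eq_zero fun m _ => ?_
  rw [Finset.sum_comm]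
  refine Finset.sum_eq_zero fun u hu => ?_
  obtain ⟨hu1, huT⟩ := Finset.mem_Icc.mp hu
  have hfmeas : Measurable[F (u - 1)] (h m u) := (hmeas u hu1 huT).2 m
  have hmg : ∀ A : Finset Ω, MeasurableSet[F (u - 1)] (A : Set Ω) →
      ∑ ω ∈ A, Q ω * S m u ω = ∑ ω ∈ A, Q ω * S m (u - 1) ω :=
    fun A hA => hQmart m (u - 1) u (Nat.sub_le u 1) huT A hA
  exact key_zero (F (u - 1)) Q (h m u) (S m u) (S m (u - 1)) hfmeas hmg
end

section
/- Superhedging lower bound under model uncertainty with short sales prohibitions: let 𝒬 be a nonempty family of probability measures on Ω such that every Q ∈ 𝒬 is a supermartingale measure. Let f* : Ω → ℝ be a discounted contingent claim. If x ∈ ℝ and H is a trading strategy with h_m(u)(ω) ≥ 0 for all m = 1,…,M, u = 1,…,T, ω ∈ Ω (each h_m(u) being ℱ_{u−1}-measurable) such that x + Σ_{m=1}^M Σ_{u=1}^T h_m(u)(ω) ΔS*_m(u)(ω) ≥ f*(ω) for every ω ∈ Ω, then x ≥ E_Q[f*] for every Q ∈ 𝒬; in particular x ≥ sup_{Q∈𝒬}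 E_Q[f*], so the minimal superhedging price is at least sup_{Q∈𝒬} E_Q[f*]. -/
open Finset MeasureTheory

variable {Ω : Type*} [Fintype Ω]

lemma fiber_step {Ω : Type*} [Fintype Ω] (m0 : MeasurableSpace Ω) (Q g D : Ω → ℝ)
    (hg : Measurable[m0] g) (hg0 : ∀ ω, 0 ≤ g ω)
    (hsup : ∀ A : Finset Ω, MeasurableSet[m0] (A : Set Ω) → ∑ ω ∈ A, Q ω * D ω ≤ 0) :
    ∑ ω, Q ω * (g ω * D ω) ≤ 0 := by
  classical
  rw [← Finset.sum_fiberwise_of_maps_to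
    (fun x _ => Finset.mem_image_of_mem g (Finset.mem_univ x))
    (fun ω => Q ω * (g ω * D ω))]
  apply Finset.sum_nonpos
  intro c hc
  have hrw : ∑ ω ∈ Finset.univ.filter (fun ω => g ω = c), Q ω * (g ω * D ω)
      = c * ∑ ω ∈ Finset.univ.filter (fun ω => g ω = c), Q ω * D ω := by
    rw [Finset.mul_sum]
    refine Finset.sum_congr rfl fun ω hω => ?_
    have : g ω = c := (Finset.mem_filter.mp hω).2
    rw [this]; ring
  rw [hrw]
  obtain ⟨ω0, _, hω0⟩ := Finset.mem_image.mp hc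
  have hc0 : 0 ≤ c := hω0 ▸ hg0 ω0
  have hmeasA : MeasurableSet[m0] ((Finset.univ.filter (fun ω => g ω = c) : Finset Ω) : Set Ω) := by
    have : ((Finset.univ.filter (fun ω => g ω = c) : Finset Ω) : Set Ω) = g ⁻¹' {c} := by
      ext ω; simp
    rw [this]
    exact hg (measurableSet_singleton c)
  exact mul_nonpos_of_nonneg_of_nonpos hc0 (hsup _ hmeasA)

/-- Superhedging lower bound under model uncertainty with short sales prohibitions:
if `x + H·S*(T) ≥ f` everywhere for a short-sales-free strategy, then
`x ≥ E_Q[f]` for every `Q` in the family `𝒬` of supermartingale measures,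
hence `x ≥ sup_{Q ∈ 𝒬} E_Q[f]`. -/
theorem superhedging_lower_bound [Nonempty Ω]
    (T : ℕ) {M : ℕ}
    (F : ℕ → MeasurableSpace Ω)
    (hFmono : ∀ s t : ℕ, s ≤ t → t ≤ T → F s ≤ F t)
    (hF0 : F 0 = ⊥) (hFT : F T = ⊤)
    (S : Fin M → ℕ → Ω → ℝ)
    (hSmeas : ∀ (m : Fin M) (t : ℕ), t ≤ T → Measurable[F t] (S m t))
    (𝒬 : Set (Ω → ℝ)) (h𝒬ne : 𝒬.Nonempty)
    (h𝒬prob : ∀ Q ∈ 𝒬, IsProb Q)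
    (h𝒬super : ∀ Q ∈ 𝒬, IsSupermartingaleMeasure T F S Q)
    (f : Ω → ℝ) (x : ℝ)
    (h0 : ℕ → Ω → ℝ) (h : Fin M → ℕ → Ω → ℝ)
    (hmeas : MeasStrategy T F h0 h)
    (hshort : ∀ (m : Fin M) (u : ℕ), 1 ≤ u → u ≤ T → ∀ ω, 0 ≤ h m u ω)
    (hsuper : ∀ ω, f ω ≤ x + Gstar S h T ω) :
    (∀ Q ∈ 𝒬, expect Q f ≤ x) ∧
      sSup {y : ℝ | ∃ Q ∈ 𝒬, y = expect Q f} ≤ x := by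
  classical
  have key : ∀ Q ∈ 𝒬, expect Q f ≤ x := by
    intro Q hQ
    obtain ⟨hQ0, hQ1⟩ := h𝒬prob Q hQ
    have hG : expect Q (Gstar S h T) ≤ 0 := by
      unfold _root_.expect Gstar
      have hswap : ∑ ω, Q ω * ∑ m, ∑ u ∈ Finset.Icc 1 T, h m u ω * (S m u ω - S m (u-1) ω)
          = ∑ m, ∑ u ∈ Finset.Icc 1 T, ∑ ω, Q ω * (h m u ω * (S m u ω - S m (u-1) ω)) := by
        simp_rw [Finset.mul_sum]
        rw [Finset.sum_comm]
        refine Finset.sum_congr rfl fun m _ => Finset.sum_comm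
      rw [hswap]
      apply Finset.sum_nonpos; intro m _
      apply Finset.sum_nonpos; intro u hu
      obtain ⟨hu1, huT⟩ := Finset.mem_Icc.mp hu
      refine fiber_step (F (u-1)) Q (h m u) (fun ω => S m u ω - S m (u-1) ω)
        ((hmeas u hu1 huT).2 m) (hshort m u hu1 huT) ?_
      intro A hA
      have := h𝒬super Q hQ m (u-1) u (Nat.sub_le u 1) huT A hA
      have : ∑ ω ∈ A, Q ω * S m u ω - ∑ ω ∈ A, Q ω * S m (u-1) ω ≤ 0 := by linarith
      calc ∑ ω ∈ A, Q ω * (S m u ω - S m (u-1) ω)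
          = ∑ ω ∈ A, Q ω * S m u ω - ∑ ω ∈ A, Q ω * S m (u-1) ω := by
            rw [← Finset.sum_sub_distrib]; exact Finset.sum_congr rfl fun ω _ => by ring
        _ ≤ 0 := this
    have hmono : expect Q f ≤ expect Q (fun ω => x + Gstar S h T ω) := by
      unfold _root_.expect
      exact Finset.sum_le_sum fun ω _ =>
        mul_le_mul_of_nonneg_left (hsuper ω) (hQ0 ω)
    have heq : expect Q (fun ω => x + Gstar S h T ω) = x + expect Q (Gstar S h T) := by
      unfold _root_.expect
      simp_rw [mul_add, Finset.sum_add_distrib, ← Finset.sum_mul, hQ1, one_mul]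
    linarith [hmono, heq ▸ hmono]
  refine ⟨key, ?_⟩
  obtain ⟨Q0, hQ0⟩ := h𝒬ne
  refine csSup_le ⟨_root_.expect Q0 f, Q0, hQ0, rfl⟩ ?_
  rintro y ⟨Q, hQ, rfl⟩
  exact key Q hQ
end
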